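/- arXiv:2604.00271 — 8 statements merged into one kernel-verified Lean document; each statement's English description precedes it below -/
import Mathlib

section
/- Let A, B ⊆ ℝ² be finite nonempty sets such that p₁ < q₁ for every p ∈ A and q ∈ B. Then there exists a pair (a, b) ∈ A × B that is a bridge of (A, B), i.e. every point p ∈ A ∪ B satisfies (p₂ − a₂)·(b₁ − a₁) ≤ (b₂ − a₂)·(p₁ − a₁). -/
/-- `(a, b) ∈ A × B` is a bridge of `(A, B)`: every point of `A ∪ B` lies on or
below the line through `a` and `b`. -/
def IsBridge (A B : Set (ℝ × ℝ)) (a b : ℝ × ℝ) : Prop :=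
  a ∈ A ∧ b ∈ B ∧
    ∀ p ∈ A ∪ B, (p.2 - a.2) * (b.1 - a.1) ≤ (b.2 - a.2) * (p.1 - a.1)

/-- For finite nonempty vertically separated sets `A` and `B`, a bridge exists. -/
theorem exists_bridge (A B : Set (ℝ × ℝ)) (hA : A.Finite) (hB : B.Finite)
    (hAne : A.Nonempty) (hBne : B.Nonempty)
    (hsep : ∀ p ∈ A, ∀ q ∈ B, p.1 < q.1) :
    ∃ a b, IsBridge A B a b := by
  classical
  set Bf : Finset (ℝ × ℝ) := hB.toFinset with hBf
  have hBfne : Bf.Nonempty := by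
    simpa [hBf, Set.Finite.toFinset_nonempty] using hBne
  have hmemBf : ∀ q, q ∈ Bf ↔ q ∈ B := fun q => hB.mem_toFinset
  -- slope function
  set sl : ℝ × ℝ → ℝ × ℝ → ℝ := fun a b => (b.2 - a.2) / (b.1 - a.1) with hsl
  set h : ℝ × ℝ → ℝ := fun a => Bf.sup' hBfne (sl a) with hh
  -- choose a ∈ A minimizing h
  obtain ⟨a, ha, hamin⟩ := Set.exists_min_image A h hA hAne
  -- choose b ∈ B attaining the sup
  obtain ⟨b, hbBf, hbeq⟩ := Finset.exists_mem_eq_sup' hBfne (sl a)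
  have hb : b ∈ B := (hmemBf b).1 hbBf
  have hab : a.1 < b.1 := hsep a ha b hb
  set lam : ℝ := sl a b with hlam
  have hlam_eq : h a = lam := hbeq
  -- every q ∈ B : slope a q ≤ lam
  have hBle : ∀ q ∈ B, q.2 - a.2 ≤ lam * (q.1 - a.1) := by
    intro q hq
    have haq : a.1 < q.1 := hsep a ha q hq
    have h1 : sl a q ≤ h a := Finset.le_sup' (sl a) ((hmemBf q).2 hq)
    rw [hlam_eq] at h1
    have h2 : (q.2 - a.2) / (q.1 - a.1) ≤ lam := h1
    rw [div_le_iff₀ (by linarith)] at h2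
    linarith
  -- every p ∈ A : p lies below the line, i.e. p.2 - a.2 ≤ lam * (p.1 - a.1)
  have hAle : ∀ p ∈ A, p.2 - a.2 ≤ lam * (p.1 - a.1) := by
    intro p hp
    by_contra hcon
    push_neg at hcon
    -- h p ≥ h a = lam, pick witness b'
    have hge : h a ≤ h p := hamin p hp
    obtain ⟨b', hb'Bf, hb'eq⟩ := Finset.exists_mem_eq_sup' hBfne (sl p)
    have hb' : b' ∈ B := (hmemBf b').1 hb'Bf
    have hpb' : p.1 < b'.1 := hsep p hp b' hb'
    have h1 : lam ≤ sl p b' := by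
      calc lam = Bf.sup' hBfne (sl a) := hbeq.symm
        _ ≤ Bf.sup' hBfne (sl p) := hge
        _ = sl p b' := hb'eq
    have h2 : b'.2 - a.2 ≤ lam * (b'.1 - a.1) := hBle b' hb'
    -- but p strictly above the line and b' below forces sl p b' < lam
    have h3 : (b'.2 - p.2) / (b'.1 - p.1) < lam := by
      rw [div_lt_iff₀ (by linarith)]
      nlinarith
    have : sl p b' < lam := h3
    linarith
  refine ⟨a, b, ha, hb, ?_⟩
  have hkey : lam * (b.1 - a.1) = b.2 - a.2 :=
    div_mul_cancel₀ _ (by linarith : b.1 - a.1 ≠ 0)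
  have key : ∀ p : ℝ × ℝ, p.2 - a.2 ≤ lam * (p.1 - a.1) →
      (p.2 - a.2) * (b.1 - a.1) ≤ (b.2 - a.2) * (p.1 - a.1) := by
    intro p h1
    calc (p.2 - a.2) * (b.1 - a.1)
        ≤ (lam * (p.1 - a.1)) * (b.1 - a.1) :=
          mul_le_mul_of_nonneg_right h1 (by linarith)
      _ = (lam * (b.1 - a.1)) * (p.1 - a.1) := by ring
      _ = (b.2 - a.2) * (p.1 - a.1) := by rw [hkey]
  rintro p (hp | hp)
  · exact key p (hAle p hp)
  · exact key p (hBle p hp)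
end

section
/- Let A, B ⊆ ℝ² be finite nonempty sets such that p₁ < q₁ for every p ∈ A and q ∈ B, such that all points of A ∪ B have pairwise distinct x-coordinates, and such that no three distinct points of A ∪ B are collinear. If (a, b) ∈ A × B and (a', b') ∈ A × B are both bridges of (A, B), then a = a' and b = b'. (The bridge between two vertically separated point sets is unique.) -/
/-!
Both bridge lines, viewed as affine functions of `x`, lie weakly above each other at the
`x`-coordinates of the other bridge's endpoints. Since the two bridges' `x`-ranges overlap in an
open interval, this forces the two lines to coincide. Then `a'` and `b'` lie on the line `ab`,
and since no three points are collinear they must be `a` and `b`.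
-/

lemma affine_eq_zero_of_interlaced {f : ℝ → ℝ} {m c : ℝ} (hf : ∀ x, f x = m * x + c)
    {x₁ x₂ y₁ y₂ : ℝ} (hx₁ : 0 ≤ f x₁) (hx₂ : 0 ≤ f x₂) (hy₁ : f y₁ ≤ 0) (hy₂ : f y₂ ≤ 0)
    (h₁₂ : x₁ < y₂) (h₂₁ : y₁ < x₂) (x : ℝ) : f x = 0 := by
  have hm : m = 0 := by
    rw [hf] at hx₁ hx₂ hy₁ hy₂
    rcases le_total 0 m with hm | hm
    · have : m * (y₂ - x₁) = 0 := by nlinarith [mul_nonneg hm (sub_nonneg.2 h₁₂.le)]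
      exact (mul_eq_zero.1 this).resolve_right (sub_ne_zero.2 h₁₂.ne')
    · have : m * (x₂ - y₁) = 0 := by
        nlinarith [mul_nonneg_of_nonpos_of_nonpos hm (sub_nonpos.2 h₂₁.le)]
      exact (mul_eq_zero.1 this).resolve_right (sub_ne_zero.2 h₂₁.ne')
  have hc : c = 0 := by
    rw [hf, hm] at hx₁ hy₂
    linarith
  rw [hf, hm, hc, zero_mul, add_zero]

/-- When `a.1 = b.1`, division by zero makes this the constant function `a.2`. -/
noncomputable def lineThrough (a b : ℝ × ℝ) (x : ℝ) : ℝ :=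
  a.2 + (b.2 - a.2) / (b.1 - a.1) * (x - a.1)

@[simp]
lemma lineThrough_left (a b : ℝ × ℝ) : lineThrough a b a.1 = a.2 := by
  simp [lineThrough]

lemma lineThrough_right {a b : ℝ × ℝ} (h : a.1 ≠ b.1) : lineThrough a b b.1 = b.2 := by
  have : b.1 - a.1 ≠ 0 := sub_ne_zero.2 h.symm
  rw [lineThrough, div_mul_cancel₀ _ this]
  ring

lemma collinear_of_eq_lineThrough {a b p : ℝ × ℝ} (h : a.1 ≠ b.1)
    (hp : p.2 = lineThrough a b p.1) : Collinear ℝ ({p, a, b} : Set (ℝ × ℝ)) := by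
  have : b.1 - a.1 ≠ 0 := sub_ne_zero.2 h.symm
  apply collinear_insert_of_mem_affineSpan_pair
  convert AffineMap.lineMap_mem_affineSpan_pair ((p.1 - a.1) / (b.1 - a.1)) a b
  rw [AffineMap.lineMap_apply_module', Prod.ext_iff]
  simp only [Prod.fst_add, Prod.snd_add, Prod.smul_fst, Prod.smul_snd, Prod.fst_sub,
    Prod.snd_sub, smul_eq_mul]
  constructor
  · field_simp
    ring
  · rw [hp, lineThrough]
    ring

lemma le_lineThrough_of_isBridge {A B : Set (ℝ × ℝ)} {a b : ℝ × ℝ} (hab : IsBridge A B a b)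
    (h : a.1 < b.1) {p : ℝ × ℝ} (hp : p ∈ A ∪ B) : p.2 ≤ lineThrough a b p.1 := by
  rw [lineThrough, div_mul_eq_mul_div, ← sub_le_iff_le_add', le_div_iff₀ (sub_pos.2 h)]
  exact hab.2.2 p hp

lemma lineThrough_eq_of_isBridge {A B : Set (ℝ × ℝ)} (hsep : ∀ p ∈ A, ∀ q ∈ B, p.1 < q.1)
    {a b a' b' : ℝ × ℝ} (hab : IsBridge A B a b) (hab' : IsBridge A B a' b') :
    lineThrough a b = lineThrough a' b' := by
  have hab₁ := hsep a hab.1 b hab.2.1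
  have hab₁' := hsep a' hab'.1 b' hab'.2.1
  have below : ∀ p ∈ A ∪ B, p.2 ≤ lineThrough a b p.1 :=
    fun p => le_lineThrough_of_isBridge hab hab₁
  have below' : ∀ p ∈ A ∪ B, p.2 ≤ lineThrough a' b' p.1 :=
    fun p => le_lineThrough_of_isBridge hab' hab₁'
  set s := (b.2 - a.2) / (b.1 - a.1)
  set s' := (b'.2 - a'.2) / (b'.1 - a'.1)
  funext x
  have := affine_eq_zero_of_interlaced (f := fun x => lineThrough a' b' x - lineThrough a b x)
    (m := s' - s) (c := (a'.2 - s' * a'.1) - (a.2 - s * a.1))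
    (fun x => by simp only [lineThrough]; ring)
    (x₁ := a.1) (x₂ := b.1) (y₁ := a'.1) (y₂ := b'.1)
    (by simpa using below' a (.inl hab.1))
    (by simpa [lineThrough_right hab₁.ne] using below' b (.inr hab.2.1))
    (by simpa using below a' (.inl hab'.1))
    (by simpa [lineThrough_right hab₁'.ne] using below b' (.inr hab'.2.1))
    (hsep a hab.1 b' hab'.2.1) (hsep a' hab'.1 b hab.2.1) x
  linarith

lemma eq_or_eq_of_eq_lineThrough {S : Set (ℝ × ℝ)}
    (hcol : ∀ p ∈ S, ∀ q ∈ S, ∀ r ∈ S, p ≠ q → q ≠ r → p ≠ r →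
      ¬ Collinear ℝ ({p, q, r} : Set (ℝ × ℝ)))
    {a b p : ℝ × ℝ} (ha : a ∈ S) (hb : b ∈ S) (hp : p ∈ S) (h : a.1 ≠ b.1)
    (hpab : p.2 = lineThrough a b p.1) : p = a ∨ p = b := by
  by_contra! hne
  exact hcol p hp a ha b hb hne.1 (fun hab => h (congrArg Prod.fst hab)) hne.2
    (collinear_of_eq_lineThrough h hpab)

theorem bridge_unique_general (A B : Set (ℝ × ℝ))
    (hsep : ∀ p ∈ A, ∀ q ∈ B, p.1 < q.1)
    (hcol : ∀ p ∈ A ∪ B, ∀ q ∈ A ∪ B, ∀ r ∈ A ∪ B,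
      p ≠ q → q ≠ r → p ≠ r → ¬ Collinear ℝ ({p, q, r} : Set (ℝ × ℝ)))
    {a b a' b' : ℝ × ℝ}
    (hab : IsBridge A B a b) (hab' : IsBridge A B a' b') :
    a = a' ∧ b = b' := by
  have hline := lineThrough_eq_of_isBridge hsep hab hab'
  obtain ⟨ha, hb, -⟩ := hab
  obtain ⟨ha', hb', -⟩ := hab'
  have hab₁ : a.1 ≠ b.1 := (hsep a ha b hb).ne
  have ha'_on : a'.2 = lineThrough a b a'.1 := by rw [hline, lineThrough_left]
  have hb'_on : b'.2 = lineThrough a b b'.1 := by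
    rw [hline, lineThrough_right (hsep a' ha' b' hb').ne]
  have on_line := fun {p} (hp : p ∈ A ∪ B) =>
    eq_or_eq_of_eq_lineThrough hcol (.inl ha) (.inr hb) hp hab₁
  constructor
  · exact ((on_line (.inl ha') ha'_on).resolve_right
      fun h => (hsep a' ha' b hb).ne (congrArg Prod.fst h)).symm
  · exact ((on_line (.inr hb') hb'_on).resolve_left
      fun h => (hsep a ha b' hb').ne' (congrArg Prod.fst h)).symm

/-- Under general position (pairwise distinct `x`-coordinates and no three distinct
collinear points), the bridge between two vertically separated finite nonempty sets
is unique. -/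
theorem bridge_unique (A B : Set (ℝ × ℝ)) (hA : A.Finite) (hB : B.Finite)
    (hAne : A.Nonempty) (hBne : B.Nonempty)
    (hsep : ∀ p ∈ A, ∀ q ∈ B, p.1 < q.1)
    (hx : ∀ p ∈ A ∪ B, ∀ q ∈ A ∪ B, p.1 = q.1 → p = q)
    (hcol : ∀ p ∈ A ∪ B, ∀ q ∈ A ∪ B, ∀ r ∈ A ∪ B,
      p ≠ q → q ≠ r → p ≠ r → ¬ Collinear ℝ ({p, q, r} : Set (ℝ × ℝ)))
    {a b a' b' : ℝ × ℝ}
    (hab : IsBridge A B a b) (hab' : IsBridge A B a' b') :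
    a = a' ∧ b = b' :=
  bridge_unique_general A B hsep hcol hab hab'
end

section
/- Let A, B ⊆ ℝ² be finite nonempty sets such that p₁ < q₁ for every p ∈ A and q ∈ B, and let (a, b) ∈ A × B be a bridge of (A, B). Then convexHull(A ∪ B) + D = convexHull({p ∈ A : p₁ ≤ a₁} ∪ {p ∈ B : b₁ ≤ p₁}) + D. (The upper convex hull of A ∪ B consists of a prefix of the upper hull of A, the bridge edge, and a suffix of the upper hull of B.) -/
open Pointwise

/-- The downward vertical cone in the plane. -/
def downCone : Set (ℝ × ℝ) := {d : ℝ × ℝ | d.1 = 0 ∧ d.2 ≤ 0}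

lemma downCone_convex : Convex ℝ downCone := by
  intro x hx y hy s t hs ht hst
  obtain ⟨hx1, hx2⟩ := hx
  obtain ⟨hy1, hy2⟩ := hy
  constructor
  · show s * x.1 + t * y.1 = 0
    rw [hx1, hy1]; ring
  · show s * x.2 + t * y.2 ≤ 0
    nlinarith

lemma key_below (a b p : ℝ × ℝ) (h1 : a.1 ≤ p.1) (h2 : p.1 ≤ b.1) (hlt : a.1 < b.1)
    (hbr : (p.2 - a.2) * (b.1 - a.1) ≤ (b.2 - a.2) * (p.1 - a.1)) :
    ∃ q ∈ segment ℝ a b, q.1 = p.1 ∧ p.2 ≤ q.2 := by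
  have hpos : (0:ℝ) < b.1 - a.1 := by linarith
  set t := (p.1 - a.1) / (b.1 - a.1) with htdef
  have ht0 : 0 ≤ t := div_nonneg (by linarith) hpos.le
  have ht1 : t ≤ 1 := (div_le_one hpos).2 (by linarith)
  have htm : t * (b.1 - a.1) = p.1 - a.1 := div_mul_cancel₀ _ hpos.ne'
  refine ⟨(1 - t) • a + t • b, ⟨1 - t, t, by linarith, ht0, by ring, rfl⟩, ?_, ?_⟩
  · show (1 - t) * a.1 + t * b.1 = p.1
    nlinarith [htm]
  · show p.2 ≤ (1 - t) * a.2 + t * b.2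
    have h3 : p.2 - a.2 ≤ (b.2 - a.2) * t := by
      have h4 : (p.2 - a.2) * (b.1 - a.1) ≤ ((b.2 - a.2) * t) * (b.1 - a.1) := by
        have he : ((b.2 - a.2) * t) * (b.1 - a.1) = (b.2 - a.2) * (p.1 - a.1) := by
          rw [mul_assoc, htm]
        linarith
      exact le_of_mul_le_mul_right h4 hpos
    nlinarith

/-- The upper hull of `A ∪ B` consists of a prefix of the upper hull of `A`
(up to the bridge endpoint `a`), the bridge, and a suffix of the upper hull of `B`
(from the bridge endpoint `b` on). -/
theorem upperHull_union_eq_prefix_suffix (A B : Set (ℝ × ℝ))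
    (hA : A.Finite) (hB : B.Finite) (hAne : A.Nonempty) (hBne : B.Nonempty)
    (hsep : ∀ p ∈ A, ∀ q ∈ B, p.1 < q.1)
    {a b : ℝ × ℝ} (hab : IsBridge A B a b) :
    convexHull ℝ (A ∪ B) + downCone =
      convexHull ℝ ({p ∈ A | p.1 ≤ a.1} ∪ {p ∈ B | b.1 ≤ p.1}) + downCone := by
  obtain ⟨haA, hbB, hbr⟩ := hab
  set S := ({p ∈ A | p.1 ≤ a.1} ∪ {p ∈ B | b.1 ≤ p.1}) with hSdef
  have hab1 : a.1 < b.1 := hsep a haA b hbB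
  have haS : a ∈ S := Or.inl ⟨haA, le_refl _⟩
  have hbS : b ∈ S := Or.inr ⟨hbB, le_refl _⟩
  set C := convexHull ℝ S + downCone with hCdef
  have hCconv : Convex ℝ C := (convex_convexHull ℝ S).add downCone_convex
  have hhullC : convexHull ℝ S ⊆ C := by
    intro x hx
    exact ⟨x, hx, (0, 0), ⟨rfl, le_refl _⟩, by simp⟩
  -- every point of A ∪ B is in C
  have hsub : A ∪ B ⊆ C := by
    intro p hp
    have hinC : ∀ p : ℝ × ℝ, p ∈ A ∪ B → a.1 ≤ p.1 → p.1 ≤ b.1 → p ∈ C := by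
      intro p hp h1 h2
      obtain ⟨q, hq, hq1, hq2⟩ := key_below a b p h1 h2 hab1 (hbr p hp)
      have hqC : q ∈ convexHull ℝ S :=
        (convex_convexHull ℝ S).segment_subset (subset_convexHull ℝ S haS)
          (subset_convexHull ℝ S hbS) hq
      refine ⟨q, hqC, (0, p.2 - q.2), ⟨rfl, show p.2 - q.2 ≤ 0 by linarith⟩, ?_⟩
      ext <;> simp [hq1]
    rcases hp with hpA | hpB
    · by_cases hle : p.1 ≤ a.1
      · exact hhullC (subset_convexHull ℝ S (Or.inl ⟨hpA, hle⟩))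
      · exact hinC p (Or.inl hpA) (by linarith) (hsep p hpA b hbB).le
    · by_cases hle : b.1 ≤ p.1
      · exact hhullC (subset_convexHull ℝ S (Or.inr ⟨hpB, hle⟩))
      · exact hinC p (Or.inr hpB) (hsep a haA p hpB).le (by linarith)
  apply Set.Subset.antisymm
  · rintro x ⟨y, hy, d, hd, rfl⟩
    obtain ⟨s, hs, d', hd', rfl⟩ := convexHull_min hsub hCconv hy
    refine ⟨s, hs, d' + d, ?_, by ring⟩
    exact ⟨by simp [hd'.1, hd.1], by have := hd.2; have := hd'.2; simpa using add_nonpos hd'.2 hd.2⟩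
  · refine Set.add_subset_add_right (convexHull_mono ?_)
    rintro p (⟨hp, _⟩ | ⟨hp, _⟩)
    · exact Or.inl hp
    · exact Or.inr hp
end

section
/- Let P ⊆ ℝ² be a finite set and q ∈ ℝ². Then q ∈ convexHull(P) + D if and only if there exist points a, b ∈ P such that q ∈ convexHull({a, b}) + D. (A query point lies on or below the upper convex hull of P exactly when it lies on or below some chord of P; this underlies answering point-location queries using only the bridges stored in a CH-Tree.) -/
/-!
Let `x ∈ conv P` and let `top` be the highest point of the compact slice of `conv P` on the
vertical line through `x`. Then `top` is not interior to `conv P`, so in a Carathéodory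
representation of `top` with positive weights the affinely independent points of `P` involved
cannot span the plane: there are at most two of them, and `top` lies on a chord of `P`.
-/

open Pointwise

open Set Finset Module Topology

theorem AffineBasis.sum_smul_mem_interior_convexHull {ι E : Type*} [Fintype ι]
    [NormedAddCommGroup E] [NormedSpace ℝ E] (b : AffineBasis ι ℝ E) {w : ι → ℝ}
    (hw₀ : ∀ i, 0 < w i) (hw₁ : ∑ i, w i = 1) :
    ∑ i, w i • b i ∈ interior (convexHull ℝ (range b)) := by
  rw [b.interior_convexHull, ← univ.affineCombination_eq_linear_combination _ _ hw₁]
  intro i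
  rw [b.coord_apply_combination_of_mem (mem_univ i) hw₁]
  exact hw₀ i

theorem exists_finset_card_le_finrank_of_mem_convexHull_of_notMem_interior {E : Type*}
    [NormedAddCommGroup E] [NormedSpace ℝ E] [FiniteDimensional ℝ E] {s : Set E} {x : E}
    (hx : x ∈ convexHull ℝ s) (hx_int : x ∉ interior (convexHull ℝ s)) :
    ∃ t : Finset E, ↑t ⊆ s ∧ #t ≤ finrank ℝ E ∧ x ∈ convexHull ℝ (t : Set E) := by
  classical
  obtain ⟨ι, _, z, w, hzs, hz, hw₀, hw₁, rfl⟩ := eq_pos_convex_span_of_mem_convexHull hx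
  have hcard : Fintype.card ι ≠ finrank ℝ E + 1 := fun hcard => hx_int <|
    let b : AffineBasis ι ℝ E := ⟨z, hz, hz.affineSpan_eq_top_iff_card_eq_finrank_add_one.2 hcard⟩
    interior_mono (convexHull_mono hzs) (b.sum_smul_mem_interior_convexHull hw₀ hw₁)
  refine ⟨univ.image z, by simpa [Set.range_subset_iff] using hzs, ?_, ?_⟩
  · have := hz.card_le_finrank_succ.trans (Nat.add_le_add_right (Submodule.finrank_le _) 1)
    exact card_image_le.trans (by rw [card_univ]; omega)
  · exact (convex_convexHull ℝ _).sum_mem (fun i _ => (hw₀ i).le) hw₁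
      fun i _ => subset_convexHull ℝ _ (by simp)

theorem Finset.exists_mem_convexHull_pair_of_card_le_two {E : Type*} [AddCommGroup E]
    [Module ℝ E] {t : Finset E} (ht : #t ≤ 2) {x : E} (hx : x ∈ convexHull ℝ (t : Set E)) :
    ∃ a ∈ t, ∃ b ∈ t, x ∈ convexHull ℝ {a, b} := by
  classical
  interval_cases h : #t
  · simp_all
  · obtain ⟨a, rfl⟩ := card_eq_one.1 h
    exact ⟨a, mem_singleton_self a, a, mem_singleton_self a, by simpa using hx⟩
  · obtain ⟨a, b, -, rfl⟩ := card_eq_two.1 h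
    exact ⟨a, by simp, b, by simp, by simpa using hx⟩

theorem Prod.exists_snd_gt_of_mem_interior {α : Type*} [TopologicalSpace α]
    {K : Set (α × ℝ)} {p : α × ℝ} (hp : p ∈ interior K) :
    ∃ y ∈ K, y.1 = p.1 ∧ p.2 < y.2 := by
  have hK : ∀ᶠ t in 𝓝[>] p.2, (p.1, t) ∈ K :=
    nhdsWithin_le_nhds <| (Continuous.prodMk_right p.1).continuousAt.preimage_mem_nhds
      (mem_interior_iff_mem_nhds.1 hp)
  obtain ⟨t, ht, hpt⟩ := (hK.and self_mem_nhdsWithin).exists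
  exact ⟨(p.1, t), ht, rfl, hpt⟩

/-- A query point lies on or below the upper convex hull of a finite set `P` exactly
when it lies on or below some chord of `P`. -/
theorem mem_upperHull_iff_below_chord (P : Set (ℝ × ℝ)) (hP : P.Finite) (q : ℝ × ℝ) :
    q ∈ convexHull ℝ P + downCone ↔
      ∃ a ∈ P, ∃ b ∈ P, q ∈ convexHull ℝ ({a, b} : Set (ℝ × ℝ)) + downCone := by
  refine ⟨?_, fun ⟨a, ha, b, hb, hq⟩ =>
    add_subset_add_right (convexHull_mono (pair_subset ha hb)) hq⟩
  rintro ⟨x, hx, d, ⟨hd₁, hd₂⟩, rfl⟩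
  have hslice : IsCompact (convexHull ℝ P ∩ {y | y.1 = x.1}) :=
    (hP.isCompact_convexHull ℝ).inter_right (isClosed_eq continuous_fst continuous_const)
  obtain ⟨top, ⟨htop, htop₁ : top.1 = x.1⟩, hmax⟩ :=
    hslice.exists_isMaxOn ⟨x, hx, rfl⟩ continuous_snd.continuousOn
  have htop_int : top ∉ interior (convexHull ℝ P) := fun h_int => by
    obtain ⟨y, hy, hy₁, hlt⟩ := Prod.exists_snd_gt_of_mem_interior h_int
    exact (hmax ⟨hy, hy₁.trans htop₁⟩).not_gt hlt
  obtain ⟨t, htP, ht, htop_t⟩ :=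
    exists_finset_card_le_finrank_of_mem_convexHull_of_notMem_interior htop htop_int
  obtain ⟨a, ha, b, hb, htop_ab⟩ :=
    t.exists_mem_convexHull_pair_of_card_le_two (by simpa using ht) htop_t
  have hx_top : x.2 ≤ top.2 := hmax ⟨hx, rfl⟩
  refine ⟨a, htP ha, b, htP hb, top, htop_ab, x + d - top, ⟨?_, ?_⟩, add_sub_cancel _ _⟩
  · simp only [Prod.fst_sub, Prod.fst_add]; linarith
  · simp only [Prod.snd_sub, Prod.snd_add]; linarith
end

section
/- Let B ⊆ ℝ² be a finite nonempty set and let q ∈ ℝ² with q ∉ convexHull(B). Then there exists a ∈ B such that cross(a − q, p − q) ≥ 0 for every p ∈ B, and there exists b ∈ B such that cross(b − q, p − q) ≤ 0 for every p ∈ B. (Both tangent points of B as seen from the external point q exist.) -/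
/-!
Separate `q` from the convex hull of `B` by a line: there is `w` with `0 < dot w (p - q)` for
every `p ∈ B`. On this open half-plane the quotient `cross w v / dot w v` (the tangent of the
angle from `w` to `v`) orders directions by orientation, because of the Lagrange-type identity
`dot w a * cross w v - dot w v * cross w a = dot w w * cross a v`. The points of `B` at which
it is minimal and maximal are the two tangent points.
-/

def cross (u v : ℝ × ℝ) : ℝ := u.1 * v.2 - u.2 * v.1

def dot (u v : ℝ × ℝ) : ℝ := u.1 * v.1 + u.2 * v.2

lemma cross_swap (u v : ℝ × ℝ) : cross v u = -cross u v := by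
  simp only [cross]; ring

lemma dot_mul_cross_sub_dot_mul_cross (w a v : ℝ × ℝ) :
    dot w a * cross w v - dot w v * cross w a = dot w w * cross a v := by
  simp only [dot, cross]; ring

lemma dot_self_pos {w : ℝ × ℝ} (hw : w ≠ 0) : 0 < dot w w := by
  rcases not_and_or.mp (mt Prod.ext_iff.mpr hw) with h | h
  · exact add_pos_of_pos_of_nonneg (mul_self_pos.mpr h) (mul_self_nonneg _)
  · exact add_pos_of_nonneg_of_pos (mul_self_nonneg _) (mul_self_pos.mpr h)

lemma linearMap_apply_eq_dot (f : ℝ × ℝ →ₗ[ℝ] ℝ) (x : ℝ × ℝ) :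
    f x = dot (f (1, 0), f (0, 1)) x := by
  have hx : x = x.1 • ((1 : ℝ), (0 : ℝ)) + x.2 • ((0 : ℝ), (1 : ℝ)) := by
    simp
  conv_lhs => rw [hx]
  simp only [map_add, map_smul, smul_eq_mul, dot]
  ring

lemma cross_nonneg_of_div_le_div {w a v : ℝ × ℝ} (ha : 0 < dot w a) (hv : 0 < dot w v)
    (h : cross w a / dot w a ≤ cross w v / dot w v) : 0 ≤ cross a v := by
  have hw : w ≠ 0 := by rintro rfl; simp [dot] at ha
  rw [div_le_div_iff₀ ha hv] at h
  refine nonneg_of_mul_nonneg_right ?_ (dot_self_pos hw)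
  rw [← dot_mul_cross_sub_dot_mul_cross]
  linarith

lemma exists_forall_dot_sub_pos {s : Set (ℝ × ℝ)} (hs : Convex ℝ s) (hsc : IsClosed s)
    {q : ℝ × ℝ} (hq : q ∉ s) : ∃ w, ∀ p ∈ s, 0 < dot w (p - q) := by
  obtain ⟨f, u, hfq, hfs⟩ := geometric_hahn_banach_point_closed hs hsc hq
  refine ⟨(f (1, 0), f (0, 1)), fun p hp => ?_⟩
  have hfp : f (p - q) = dot (f (1, 0), f (0, 1)) (p - q) := linearMap_apply_eq_dot f (p - q)
  rw [← hfp, map_sub]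
  linarith [hfs p hp]

section TangentPoints

variable {B : Set (ℝ × ℝ)} {q w : ℝ × ℝ}

lemma exists_forall_cross_sub_nonneg (hB : B.Finite) (hBne : B.Nonempty)
    (hw : ∀ p ∈ B, 0 < dot w (p - q)) : ∃ a ∈ B, ∀ p ∈ B, 0 ≤ cross (a - q) (p - q) := by
  obtain ⟨a, ha, hmin⟩ :=
    B.exists_min_image (fun p => cross w (p - q) / dot w (p - q)) hB hBne
  exact ⟨a, ha, fun p hp => cross_nonneg_of_div_le_div (hw a ha) (hw p hp) (hmin p hp)⟩

lemma exists_forall_cross_sub_nonpos (hB : B.Finite) (hBne : B.Nonempty)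
    (hw : ∀ p ∈ B, 0 < dot w (p - q)) : ∃ b ∈ B, ∀ p ∈ B, cross (b - q) (p - q) ≤ 0 := by
  obtain ⟨b, hb, hmax⟩ :=
    B.exists_max_image (fun p => cross w (p - q) / dot w (p - q)) hB hBne
  refine ⟨b, hb, fun p hp => ?_⟩
  rw [cross_swap, neg_nonpos]
  exact cross_nonneg_of_div_le_div (hw p hp) (hw b hb) (hmax p hp)

end TangentPoints

/-- Both tangent points of a finite nonempty set `B` as seen from an external point
`q` exist. -/
theorem exists_tangent_points (B : Set (ℝ × ℝ)) (hB : B.Finite) (hBne : B.Nonempty)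
    (q : ℝ × ℝ) (hq : q ∉ convexHull ℝ B) :
    (∃ a ∈ B, ∀ p ∈ B, 0 ≤ cross (a - q) (p - q)) ∧
      (∃ b ∈ B, ∀ p ∈ B, cross (b - q) (p - q) ≤ 0) := by
  obtain ⟨w, hw⟩ := exists_forall_dot_sub_pos (convex_convexHull ℝ B)
    (hB.isCompact_convexHull ℝ).isClosed hq
  have hwB : ∀ p ∈ B, 0 < dot w (p - q) := fun p hp => hw p (subset_convexHull ℝ B hp)
  exact ⟨exists_forall_cross_sub_nonneg hB hBne hwB, exists_forall_cross_sub_nonpos hB hBne hwB⟩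
end

section
/- Let B ⊆ ℝ² be a finite set and let q ∈ ℝ² with q ∉ convexHull(B). Suppose a, b ∈ B satisfy cross(a − q, p − q) ≥ 0 and cross(b − q, p − q) ≤ 0 for every p ∈ B. Then for every p ∈ B there exist reals s, t ≥ 0 with p − q = s·(a − q) + t·(b − q). (The whole bucket B is contained in the convex cone with apex q spanned by the two tangent points a and b.) -/
lemma cross_smul_left (c : ℝ) (u v : ℝ × ℝ) : cross (c • u) v = c * cross u v := by
  simp only [cross, Prod.smul_fst, Prod.smul_snd, smul_eq_mul]
  ring

lemma cross_smul_eq_add (u v w : ℝ × ℝ) :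
    cross u v • w = cross w v • u + cross u w • v := by
  ext <;> simp only [cross, Prod.smul_fst, Prod.smul_snd, Prod.fst_add, Prod.snd_add,
    smul_eq_mul] <;> ring

lemma exists_eq_smul_of_cross_eq_zero {u v : ℝ × ℝ} (hu : u ≠ 0) (h : cross u v = 0) :
    ∃ c : ℝ, v = c • u := by
  set w : ℝ × ℝ := (-u.2, u.1)
  have hw : cross u w ≠ 0 := by
    have hsq : cross u w = u.1 ^ 2 + u.2 ^ 2 := by
      simp only [cross, w]
      ring
    intro h0
    rw [hsq, add_eq_zero_iff_of_nonneg (sq_nonneg _) (sq_nonneg _)] at h0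
    exact hu (Prod.ext (pow_eq_zero_iff two_ne_zero |>.mp h0.1)
      (pow_eq_zero_iff two_ne_zero |>.mp h0.2))
  have hcramer := cross_smul_eq_add u w v
  rw [h, zero_smul, add_zero] at hcramer
  exact ⟨cross v w / cross u w, by rw [div_eq_inv_mul, mul_smul, ← hcramer, inv_smul_smul₀ hw]⟩

lemma exists_nonneg_combination_of_cross_pos {u v w : ℝ × ℝ} (huv : 0 < cross u v)
    (huw : 0 ≤ cross u w) (hvw : cross v w ≤ 0) :
    ∃ s t : ℝ, 0 ≤ s ∧ 0 ≤ t ∧ w = s • u + t • v := by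
  refine ⟨cross w v / cross u v, cross u w / cross u v,
    div_nonneg (by rw [cross_swap]; linarith) huv.le, div_nonneg huw huv.le, ?_⟩
  rw [div_eq_inv_mul, div_eq_inv_mul, mul_smul, mul_smul, ← smul_add, ← cross_smul_eq_add,
    inv_smul_smul₀ huv.ne']

lemma nonneg_of_sub_eq_smul_sub {E : Type*} [AddCommGroup E] [Module ℝ E] {s : Set E}
    {q x y : E} {μ : ℝ} (hq : q ∉ convexHull ℝ s) (hx : x ∈ s) (hy : y ∈ s)
    (h : x - q = μ • (y - q)) : 0 ≤ μ := by
  by_contra! hμ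
  refine hq (segment_subset_convexHull hx hy ?_)
  rw [mem_segment_iff_sameRay, ← neg_sub, h, ← neg_smul]
  exact SameRay.sameRay_nonneg_smul_left _ (by linarith)

theorem mem_tangent_cone_general (B : Set (ℝ × ℝ)) (q : ℝ × ℝ)
    (hq : q ∉ convexHull ℝ B) {a b : ℝ × ℝ} (ha : a ∈ B) (hb : b ∈ B)
    (hta : ∀ p ∈ B, 0 ≤ cross (a - q) (p - q))
    (htb : ∀ p ∈ B, cross (b - q) (p - q) ≤ 0) :
    ∀ p ∈ B, ∃ s t : ℝ, 0 ≤ s ∧ 0 ≤ t ∧ p - q = s • (a - q) + t • (b - q) := by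
  intro p hp
  have hne : ∀ x ∈ B, x - q ≠ 0 := fun x hx h =>
    hq (sub_eq_zero.mp h ▸ subset_convexHull ℝ B hx)
  rcases (hta b hb).lt_or_eq with hpos | hzero
  · exact exists_nonneg_combination_of_cross_pos hpos (hta p hp) (htb p hp)
  obtain ⟨c, hc⟩ := exists_eq_smul_of_cross_eq_zero (hne a ha) hzero.symm
  have hc_pos : 0 < c := (nonneg_of_sub_eq_smul_sub hq hb ha hc).lt_of_ne <| by
    rintro rfl
    exact hne b hb (by rw [hc, zero_smul])
  have hap : cross (a - q) (p - q) = 0 := by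
    have hbp := htb p hp
    rw [hc, cross_smul_left] at hbp
    exact le_antisymm (nonpos_of_mul_nonpos_right hbp hc_pos) (hta p hp)
  obtain ⟨μ, hμ⟩ := exists_eq_smul_of_cross_eq_zero (hne a ha) hap
  exact ⟨μ, 0, nonneg_of_sub_eq_smul_sub hq hp ha hμ, le_rfl, by rw [hμ, zero_smul, add_zero]⟩

/-- The whole set `B` is contained in the convex cone with apex `q` spanned by the
two tangent directions `a - q` and `b - q`. -/
theorem mem_tangent_cone (B : Set (ℝ × ℝ)) (hB : B.Finite) (q : ℝ × ℝ)
    (hq : q ∉ convexHull ℝ B) {a b : ℝ × ℝ} (ha : a ∈ B) (hb : b ∈ B)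
    (hta : ∀ p ∈ B, 0 ≤ cross (a - q) (p - q))
    (htb : ∀ p ∈ B, cross (b - q) (p - q) ≤ 0) :
    ∀ p ∈ B, ∃ s t : ℝ, 0 ≤ s ∧ 0 ≤ t ∧ p - q = s • (a - q) + t • (b - q) :=
  mem_tangent_cone_general B q hq ha hb hta htb
end

section
/- Let B₁, …, B_k ⊆ ℝ² be finite nonempty sets and let q ∈ ℝ² with q ∉ convexHull(B_i) for every i. For each i, let a_i, b_i ∈ B_i satisfy cross(a_i − q, p − q) ≥ 0 and cross(b_i − q, p − q) ≤ 0 for every p ∈ B_i. Let X = {a₁, …, a_k} ∪ {b₁, …, b_k}. Then q ∈ convexHull(B₁ ∪ ⋯ ∪ B_k) if and only if q ∈ convexHull(X). (Correctness of the non-decomposable point-location query: when the query point is outside every bucket's hull, it lies in the hull of the whole point set exactly when it lies in the hull of the 2k tangent points.) -/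
lemma LinearMap.apply_eq_fst_add_snd (g : ℝ × ℝ →ₗ[ℝ] ℝ) (v : ℝ × ℝ) :
    g v = v.1 * g (1, 0) + v.2 * g (0, 1) := by
  conv_lhs => rw [show v = v.1 • ((1 : ℝ), (0 : ℝ)) + v.2 • ((0 : ℝ), (1 : ℝ)) by ext <;> simp]
  rw [map_add, map_smul, map_smul, smul_eq_mul, smul_eq_mul]

lemma LinearMap.apply_smul_eq_apply_smul_of_cross_eq_zero (g : ℝ × ℝ →ₗ[ℝ] ℝ)
    {u w : ℝ × ℝ} (h : cross u w = 0) : g u • w = g w • u := by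
  rw [g.apply_eq_fst_add_snd u, g.apply_eq_fst_add_snd w]
  unfold cross at h
  ext <;> simp only [Prod.smul_fst, Prod.smul_snd, smul_eq_mul]
  · linear_combination (-g (0, 1)) * h
  · linear_combination g (1, 0) * h

lemma exists_nonneg_smul_add_smul_of_cross_nonneg (g : ℝ × ℝ →ₗ[ℝ] ℝ) {u v w : ℝ × ℝ}
    (hu : 0 < g u) (hv : 0 < g v) (hw : 0 < g w)
    (huv : 0 ≤ cross u v) (huw : 0 ≤ cross u w) (hwv : 0 ≤ cross w v) :
    ∃ α β : ℝ, 0 ≤ α ∧ 0 ≤ β ∧ w = α • u + β • v := by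
  have hcramer := cross_smul_eq_add u v w
  rcases huv.lt_or_eq with huv | huv
  · refine ⟨cross w v / cross u v, cross u w / cross u v, by positivity, by positivity, ?_⟩
    rw [div_eq_inv_mul, div_eq_inv_mul, mul_smul, mul_smul, ← smul_add, ← hcramer,
      inv_smul_smul₀ huv.ne']
  · -- `u` and `v` are parallel; applying `g` to Cramer's rule forces `w` to be parallel too.
    have hsum := congrArg g hcramer
    rw [← huv, zero_smul, map_zero, map_add, map_smul, map_smul, smul_eq_mul,
      smul_eq_mul] at hsum
    have huw0 : cross u w = 0 := by nlinarith [mul_nonneg hwv hu.le, mul_nonneg huw hv.le]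
    refine ⟨g w / g u, 0, by positivity, le_rfl, ?_⟩
    rw [zero_smul, add_zero, div_eq_inv_mul, mul_smul,
      ← g.apply_smul_eq_apply_smul_of_cross_eq_zero huw0, inv_smul_smul₀ hu.ne']

lemma lt_apply_of_cross_tangent (f : ℝ × ℝ →ₗ[ℝ] ℝ) {a b p q : ℝ × ℝ}
    (hq : q ∉ convexHull ℝ {a, b, p})
    (hap : 0 ≤ cross (a - q) (p - q)) (hbp : cross (b - q) (p - q) ≤ 0)
    (hba : cross (b - q) (a - q) ≤ 0) (hfa : f q < f a) (hfb : f q < f b) :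
    f q < f p := by
  obtain ⟨g, r, hgq, hg⟩ := geometric_hahn_banach_point_closed (convex_convexHull ℝ _)
    ((Set.toFinite {a, b, p}).isClosed_convexHull (𝕜 := ℝ)) hq
  have hpos : ∀ x ∈ ({a, b, p} : Set (ℝ × ℝ)), 0 < (g : ℝ × ℝ →ₗ[ℝ] ℝ) (x - q) := fun x hx => by
    have := hg x (subset_convexHull ℝ _ hx)
    simp only [ContinuousLinearMap.coe_coe, map_sub]
    linarith
  obtain ⟨α, β, hα, hβ, hcone⟩ := exists_nonneg_smul_add_smul_of_cross_nonneg _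
    (hpos a (by simp)) (hpos b (by simp)) (hpos p (by simp))
    (by rw [cross_swap]; linarith) hap (by rw [cross_swap]; linarith)
  have hpq : p ≠ q := fun h => hq (subset_convexHull ℝ _ (by simp [h]))
  have hfp : f p - f q = α * (f a - f q) + β * (f b - f q) := by
    simpa only [map_sub, map_add, map_smul, smul_eq_mul] using congrArg f hcone
  rcases hα.lt_or_eq with hα | rfl
  · nlinarith [mul_pos hα (sub_pos.2 hfa), mul_nonneg hβ (sub_pos.2 hfb).le]
  rcases hβ.lt_or_eq with hβ | rfl
  · nlinarith [mul_pos hβ (sub_pos.2 hfb)]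
  · exact absurd (sub_eq_zero.1 (by simpa using hcone)) hpq

theorem point_location_via_tangents_general {k : ℕ} (B : Fin k → Set (ℝ × ℝ))
    (q : ℝ × ℝ)
    (hq : ∀ i, q ∉ convexHull ℝ (B i))
    (a b : Fin k → ℝ × ℝ) (ha : ∀ i, a i ∈ B i) (hb : ∀ i, b i ∈ B i)
    (hta : ∀ i, ∀ p ∈ B i, 0 ≤ cross (a i - q) (p - q))
    (htb : ∀ i, ∀ p ∈ B i, cross (b i - q) (p - q) ≤ 0) :
    q ∈ convexHull ℝ (⋃ i, B i) ↔
      q ∈ convexHull ℝ (Set.range a ∪ Set.range b) := by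
  refine ⟨fun hmem => ?_, fun h => convexHull_mono (Set.union_subset
    (Set.range_subset_iff.2 fun i => Set.mem_iUnion.2 ⟨i, ha i⟩)
    (Set.range_subset_iff.2 fun i => Set.mem_iUnion.2 ⟨i, hb i⟩)) h⟩
  by_contra hX
  obtain ⟨f, r, hfq, hf⟩ := geometric_hahn_banach_point_closed (convex_convexHull ℝ _)
    (((Set.finite_range a).union (Set.finite_range b)).isClosed_convexHull (𝕜 := ℝ)) hX
  have hfX : ∀ x ∈ Set.range a ∪ Set.range b, f q < f x := fun x hx =>
    hfq.trans (hf x (subset_convexHull ℝ _ hx))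
  have hbuckets : ⋃ i, B i ⊆ {x | f q < f x} := Set.iUnion_subset fun i p hp =>
    lt_apply_of_cross_tangent (f : ℝ × ℝ →ₗ[ℝ] ℝ)
      (fun h => hq i (convexHull_mono (by simp [Set.insert_subset_iff, ha i, hb i, hp]) h))
      (hta i p hp) (htb i p hp) (htb i (a i) (ha i))
      (hfX _ (Or.inl ⟨i, rfl⟩)) (hfX _ (Or.inr ⟨i, rfl⟩))
  exact lt_irrefl (f q) (convexHull_min hbuckets (convex_halfSpace_gt f.isLinear _) hmem)

/-- Correctness of the non-decomposable point-location query: if the query point `q`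
lies outside every bucket's hull, then `q` lies in the hull of the whole point set
exactly when it lies in the hull of the `2k` tangent points. -/
theorem point_location_via_tangents {k : ℕ} (B : Fin k → Set (ℝ × ℝ))
    (hBfin : ∀ i, (B i).Finite) (hBne : ∀ i, (B i).Nonempty) (q : ℝ × ℝ)
    (hq : ∀ i, q ∉ convexHull ℝ (B i))
    (a b : Fin k → ℝ × ℝ) (ha : ∀ i, a i ∈ B i) (hb : ∀ i, b i ∈ B i)
    (hta : ∀ i, ∀ p ∈ B i, 0 ≤ cross (a i - q) (p - q))
    (htb : ∀ i, ∀ p ∈ B i, cross (b i - q) (p - q) ≤ 0) :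
    q ∈ convexHull ℝ (⋃ i, B i) ↔
      q ∈ convexHull ℝ (Set.range a ∪ Set.range b) :=
  point_location_via_tangents_general B q hq a b ha hb hta htb
end

section
/- Let A, B ⊆ ℝ² be finite nonempty sets such that p₁ < q₁ for every p ∈ A and q ∈ B, such that all points of A ∪ B have pairwise distinct x-coordinates, and such that no three distinct points of A ∪ B are collinear. Let (a, b) ∈ A × B be the bridge of (A, B). Then a point p ∈ ℝ² is an upper-hull vertex of A ∪ B if and only if either p is an upper-hull vertex of A with p₁ ≤ a₁, or p is an upper-hull vertex of B with b₁ ≤ p₁. (The upper-hull vertices of A that survive in the union form a contiguous prefix ending at the bridge endpoint a, and those of B form a contiguous suffix starting at b.) -/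
/-!
Every point of `A ∪ B` lies on or below the line `ℓ` through the bridge, and by general position
only `a` and `b` lie on it. A point of `A` strictly to the right of `a` is therefore below the
segment `[a, b]` and is not a vertex of the union, while `a` itself is one. Conversely, a point `q`
of the hull of `A ∪ B` to the left of `a` lies on a segment `[x, y]` with `x` in the hull of the
points left of `a` and `y` in the hull of those to its right; as `x` and `y` are below `ℓ`, the
segment `[x, a]` passes above `q`, so `q` is already dominated by the hull of `A`. The part about
`B` follows by reflecting the plane in the vertical axis.
-/

open Pointwise

/-- `p` is an upper-hull vertex of a finite set `S`: it belongs to `S` and does not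
lie on or below the upper hull of the remaining points. -/
def IsUpperHullVertex (S : Set (ℝ × ℝ)) (p : ℝ × ℝ) : Prop :=
  p ∈ S ∧ p ∉ convexHull ℝ (S \ {p}) + downCone

/-- For `u.1 > 0`, `wedge u (x - a) ≤ 0` says that `x` lies on or below the line through `a`
with direction `u`. -/
def wedge : (ℝ × ℝ) →ₗ[ℝ] (ℝ × ℝ) →ₗ[ℝ] ℝ :=
  LinearMap.mk₂ ℝ (fun u v => u.1 * v.2 - u.2 * v.1)
    (fun _ _ _ => by simp only [Prod.fst_add, Prod.snd_add]; ring)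
    (fun _ _ _ => by simp only [Prod.smul_fst, Prod.smul_snd, smul_eq_mul]; ring)
    (fun _ _ _ => by simp only [Prod.fst_add, Prod.snd_add]; ring)
    (fun _ _ _ => by simp only [Prod.smul_fst, Prod.smul_snd, smul_eq_mul]; ring)

@[simp]
lemma wedge_apply (u v : ℝ × ℝ) : wedge u v = u.1 * v.2 - u.2 * v.1 := rfl

lemma wedge_self (u : ℝ × ℝ) : wedge u u = 0 := by
  rw [wedge_apply]; ring

lemma convex_setOf_wedge_sub_nonpos (u a : ℝ × ℝ) :
    Convex ℝ {w | wedge u (w - a) ≤ 0} := by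
  simpa only [map_sub, sub_nonpos] using convex_halfSpace_le (wedge u).isLinear (wedge u a)

lemma mem_add_downCone_iff {K : Set (ℝ × ℝ)} {p : ℝ × ℝ} :
    p ∈ K + downCone ↔ ∃ q ∈ K, q.1 = p.1 ∧ p.2 ≤ q.2 := by
  constructor
  · rintro ⟨q, hq, d, ⟨hd1, hd2⟩, rfl⟩
    exact ⟨q, hq, by simp [hd1], by simpa using hd2⟩
  · rintro ⟨q, hq, hqp, hpq⟩
    exact ⟨q, hq, p - q, ⟨by simp [hqp], by simpa using hpq⟩, add_sub_cancel q p⟩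

lemma mem_segment_add_downCone_of_wedge_nonpos {x y z : ℝ × ℝ} (hxy : x.1 < y.1)
    (hxz : x.1 ≤ z.1) (hzy : z.1 ≤ y.1) (hz : wedge (y - x) (z - x) ≤ 0) :
    z ∈ segment ℝ x y + downCone := by
  have hd : 0 < y.1 - x.1 := sub_pos.2 hxy
  set t := (z.1 - x.1) / (y.1 - x.1)
  have ht : t * (y.1 - x.1) = z.1 - x.1 := div_mul_cancel₀ _ hd.ne'
  refine mem_add_downCone_iff.2 ⟨AffineMap.lineMap x y t, ?_, ?_, ?_⟩
  · rw [segment_eq_image_lineMap]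
    exact Set.mem_image_of_mem _
      ⟨div_nonneg (sub_nonneg.2 hxz) hd.le, (div_le_one hd).2 (by linarith)⟩
  · simp only [AffineMap.lineMap_apply_module, Prod.fst_add, Prod.smul_fst, smul_eq_mul]
    linear_combination ht
  · have key : (y.1 - x.1) * ((1 - t) * x.2 + t * y.2 - z.2) = -wedge (y - x) (z - x) := by
      simp only [wedge_apply, Prod.fst_sub, Prod.snd_sub]
      linear_combination (y.2 - x.2) * ht
    have := (mul_nonneg_iff_of_pos_left hd).1 (key ▸ neg_nonneg.2 hz)
    simp only [AffineMap.lineMap_apply_module, Prod.snd_add, Prod.smul_snd, smul_eq_mul]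
    linarith

lemma wedge_sub_sub_nonpos {u a x y : ℝ × ℝ} (hu : 0 < u.1) (hx : wedge u (x - a) ≤ 0)
    (hy : wedge u (y - a) ≤ 0) (hxa : x.1 ≤ a.1) (hay : a.1 ≤ y.1) :
    wedge (a - x) (y - x) ≤ 0 := by
  have key : u.1 * wedge (a - x) (y - x)
      = (y.1 - a.1) * wedge u (x - a) + (a.1 - x.1) * wedge u (y - a) := by
    simp only [wedge_apply, Prod.fst_sub, Prod.snd_sub]; ring
  have : u.1 * wedge (a - x) (y - x) ≤ 0 := key ▸ add_nonpos
    (mul_nonpos_of_nonneg_of_nonpos (sub_nonneg.2 hay) hx)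
    (mul_nonpos_of_nonneg_of_nonpos (sub_nonneg.2 hxa) hy)
  exact nonpos_of_mul_nonpos_right this hu

lemma mem_segment_add_downCone_of_mem_segment {u a x y z : ℝ × ℝ} (hu : 0 < u.1)
    (hx : wedge u (x - a) ≤ 0) (hy : wedge u (y - a) ≤ 0) (hxa : x.1 ≤ a.1) (hay : a.1 < y.1)
    (hz : z ∈ segment ℝ x y) (hza : z.1 ≤ a.1) : z ∈ segment ℝ x a + downCone := by
  rw [segment_eq_image_lineMap] at hz
  obtain ⟨s, ⟨hs0, -⟩, rfl⟩ := hz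
  have hz1 : (AffineMap.lineMap x y s).1 = x.1 + s * (y.1 - x.1) := by
    simp only [AffineMap.lineMap_apply_module, Prod.fst_add, Prod.smul_fst, smul_eq_mul]; ring
  rcases hxa.eq_or_lt with hxa | hxa
  · have hs : s = 0 := by nlinarith
    rw [hs, AffineMap.lineMap_apply_zero]
    exact mem_add_downCone_iff.2 ⟨x, left_mem_segment ℝ x a, rfl, le_rfl⟩
  refine mem_segment_add_downCone_of_wedge_nonpos hxa (by nlinarith) hza ?_
  have hzx : AffineMap.lineMap x y s - x = s • (y - x) := AffineMap.lineMap_vsub_left x y s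
  rw [hzx, map_smul, smul_eq_mul]
  exact mul_nonpos_of_nonneg_of_nonpos hs0 (wedge_sub_sub_nonpos hu hx hy hxa.le hay.le)

lemma mem_convexHull_add_downCone_of_fst_le {u a q : ℝ × ℝ} {S : Set (ℝ × ℝ)}
    (hu : 0 < u.1) (hS : ∀ x ∈ S, wedge u (x - a) ≤ 0) (hq : q ∈ convexHull ℝ S)
    (hqa : q.1 ≤ a.1) :
    q ∈ convexHull ℝ (insert a {x ∈ S | x.1 ≤ a.1}) + downCone := by
  set L := {x ∈ S | x.1 ≤ a.1}
  set R := {x ∈ S | a.1 < x.1}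
  have hLR : S = L ∪ R := by
    ext x
    simp only [L, R, Set.mem_union, Set.mem_sep_iff, ← and_or_left, le_or_gt, and_true]
  have hSbelow : convexHull ℝ S ⊆ {w | wedge u (w - a) ≤ 0} :=
    convexHull_min hS (convex_setOf_wedge_sub_nonpos u a)
  rcases R.eq_empty_or_nonempty with hR | hR
  · rw [hLR, hR, Set.union_empty] at hq
    exact mem_add_downCone_iff.2 ⟨q, convexHull_mono (Set.subset_insert a L) hq, rfl, le_rfl⟩
  rcases L.eq_empty_or_nonempty with hL | hL
  · rw [hLR, hL, Set.empty_union] at hq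
    have : a.1 < q.1 := convexHull_min (fun x hx => hx.2)
      (convex_halfSpace_gt (LinearMap.fst ℝ ℝ ℝ).isLinear a.1) hq
    exact absurd hqa (not_le.2 this)
  rw [hLR, convexHull_union hL hR] at hq
  obtain ⟨x, hx, y, hy, hqxy⟩ := mem_convexJoin.1 hq
  have hxa : x.1 ≤ a.1 := convexHull_min (fun x hx => hx.2)
    (convex_halfSpace_le (LinearMap.fst ℝ ℝ ℝ).isLinear a.1) hx
  have hay : a.1 < y.1 := convexHull_min (fun x hx => hx.2)
    (convex_halfSpace_gt (LinearMap.fst ℝ ℝ ℝ).isLinear a.1) hy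
  have hxS : x ∈ convexHull ℝ S := convexHull_mono (hLR ▸ Set.subset_union_left) hx
  have hyS : y ∈ convexHull ℝ S := convexHull_mono (hLR ▸ Set.subset_union_right) hy
  refine Set.add_subset_add_right ((convex_convexHull ℝ _).segment_subset
    (convexHull_mono (Set.subset_insert a L) hx) (subset_convexHull ℝ _ (Set.mem_insert a L)))
    (mem_segment_add_downCone_of_mem_segment hu (hSbelow hxS) (hSbelow hyS) hxa hay hqxy hqa)

lemma convex_insert_setOf_lt {E : Type*} [AddCommGroup E] [Module ℝ E] (f : E →ₗ[ℝ] ℝ)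
    (e : E) :
    Convex ℝ (insert e {x | f x < f e}) := by
  rw [convex_iff_forall_pos]
  rintro x hx y hy s t hs ht hst
  rcases hx with rfl | hx <;> rcases hy with rfl | hy
  · left; rw [← add_smul, hst, one_smul]
  all_goals
    right
    simp only [Set.mem_ofPred_eq, map_add, map_smul, smul_eq_mul] at *
    obtain rfl := eq_sub_of_add_eq hst
  · nlinarith [mul_lt_mul_of_pos_left hy ht]
  · nlinarith [mul_lt_mul_of_pos_left hx hs]
  · nlinarith [mul_lt_mul_of_pos_left hx hs, mul_lt_mul_of_pos_left hy ht]

lemma IsUpperHullVertex.mono {S T : Set (ℝ × ℝ)} {p : ℝ × ℝ} (h : IsUpperHullVertex S p)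
    (hTS : T ⊆ S) (hp : p ∈ T) : IsUpperHullVertex T p :=
  ⟨hp, fun hT =>
    h.2 (Set.add_subset_add_right (convexHull_mono (Set.sdiff_subset_sdiff_left hTS)) hT)⟩

lemma not_isUpperHullVertex_of_wedge_nonpos {S : Set (ℝ × ℝ)} {a b p : ℝ × ℝ}
    (ha : a ∈ S) (hb : b ∈ S) (hap : a.1 < p.1) (hpb : p.1 < b.1)
    (hp : wedge (b - a) (p - a) ≤ 0) :
    ¬ IsUpperHullVertex S p := by
  rintro ⟨-, hpS⟩
  have hsub : segment ℝ a b ⊆ convexHull ℝ (S \ {p}) :=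
    segment_subset_convexHull ⟨ha, fun h => hap.ne (congrArg Prod.fst h)⟩
      ⟨hb, fun h => hpb.ne (congrArg Prod.fst h).symm⟩
  exact hpS (Set.add_subset_add_right hsub
    (mem_segment_add_downCone_of_wedge_nonpos (hap.trans hpb) hap.le hpb.le hp))

lemma isUpperHullVertex_of_wedge_neg {S : Set (ℝ × ℝ)} {a b : ℝ × ℝ} (ha : a ∈ S)
    (hab : a.1 < b.1) (hS : ∀ x ∈ S, x ≠ a → x ≠ b → wedge (b - a) (x - a) < 0) :
    IsUpperHullVertex S a := by
  refine ⟨ha, fun haS => ?_⟩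
  obtain ⟨q, hq, hqa, haq⟩ := mem_add_downCone_iff.1 haS
  have hba : wedge (b - a) b = wedge (b - a) a := by rw [← sub_eq_zero, ← map_sub, wedge_self]
  have hsub : S \ {a} ⊆ insert b {x | wedge (b - a) x < wedge (b - a) b} := by
    rintro x ⟨hx, hxa⟩
    by_cases hxb : x = b
    · exact Or.inl hxb
    · have hx' := hS x hx hxa hxb
      rw [map_sub, sub_neg, ← hba] at hx'
      exact Or.inr hx'
  rcases convexHull_min hsub (convex_insert_setOf_lt _ b) hq with rfl | hq'
  · exact hab.ne hqa.symm
  · rw [Set.mem_ofPred_eq, hba, ← sub_neg, ← map_sub] at hq'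
    simp only [wedge_apply, Prod.fst_sub, Prod.snd_sub, hqa, sub_self, mul_zero, sub_zero] at hq'
    nlinarith

def negFst : (ℝ × ℝ) ≃ₗ[ℝ] (ℝ × ℝ) :=
  (LinearEquiv.neg ℝ).prodCongr (LinearEquiv.refl ℝ ℝ)

@[simp]
lemma negFst_apply (p : ℝ × ℝ) : negFst p = (-p.1, p.2) := rfl

lemma wedge_negFst (a b x : ℝ × ℝ) :
    wedge (negFst a - negFst b) (negFst x - negFst b) = wedge (b - a) (x - a) := by
  simp only [wedge_apply, negFst_apply, Prod.fst_sub, Prod.snd_sub, Prod.mk_sub_mk]; ring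

lemma image_negFst_downCone : negFst '' downCone = downCone := by
  ext ⟨d₁, d₂⟩
  simp [downCone, neg_eq_iff_eq_neg]

lemma isUpperHullVertex_image_iff (f : (ℝ × ℝ) ≃ₗ[ℝ] (ℝ × ℝ))
    (hf : f '' downCone = downCone)
    {S : Set (ℝ × ℝ)} {p : ℝ × ℝ} :
    IsUpperHullVertex (f '' S) (f p) ↔ IsUpperHullVertex S p := by
  have hdiff : f '' S \ {f p} = f '' (S \ {p}) := by
    rw [Set.image_sdiff f.injective, Set.image_singleton]
  have hhull : f '' convexHull ℝ (S \ {p}) = convexHull ℝ (f '' (S \ {p})) :=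
    f.toLinearMap.image_convexHull _
  rw [IsUpperHullVertex, IsUpperHullVertex, hdiff, ← hhull, ← hf, ← Set.image_add,
    f.injective.mem_set_image, f.injective.mem_set_image, hf]

lemma collinear_of_wedge_eq_zero {a b x : ℝ × ℝ} (hab : a.1 ≠ b.1)
    (h : wedge (b - a) (x - a) = 0) : Collinear ℝ {x, a, b} := by
  apply collinear_insert_of_mem_affineSpan_pair
  have hd : b.1 - a.1 ≠ 0 := sub_ne_zero.2 hab.symm
  convert AffineMap.lineMap_mem_affineSpan_pair ((x.1 - a.1) / (b.1 - a.1)) a b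
  simp only [wedge_apply, Prod.fst_sub, Prod.snd_sub] at h
  ext <;> simp only [AffineMap.lineMap_apply_module, Prod.fst_add, Prod.snd_add, Prod.smul_fst,
    Prod.smul_snd, smul_eq_mul] <;> field_simp
  · ring
  · linear_combination h

section Bridge

variable {A B : Set (ℝ × ℝ)} {a b p : ℝ × ℝ}

lemma isUpperHullVertex_union_iff_of_mem_left (hsep : ∀ x ∈ A, ∀ y ∈ B, x.1 < y.1)
    (ha : a ∈ A) (hb : b ∈ B)
    (hAB : ∀ x ∈ A ∪ B, x ≠ a → x ≠ b → wedge (b - a) (x - a) < 0)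
    (hp : p ∈ A) : IsUpperHullVertex (A ∪ B) p ↔ IsUpperHullVertex A p ∧ p.1 ≤ a.1 := by
  have hab : a.1 < b.1 := hsep a ha b hb
  have hbelow : ∀ x ∈ A ∪ B, wedge (b - a) (x - a) ≤ 0 := by
    intro x hx
    by_cases hxa : x = a
    · rw [hxa, sub_self, map_zero]
    by_cases hxb : x = b
    · rw [hxb, wedge_self]
    exact (hAB x hx hxa hxb).le
  constructor
  · intro h
    refine ⟨h.mono Set.subset_union_left hp, not_lt.1 fun hap => ?_⟩
    exact not_isUpperHullVertex_of_wedge_nonpos (Or.inl ha) (Or.inr hb) hap (hsep p hp b hb)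
      (hbelow p h.1) h
  rintro ⟨⟨-, hpA⟩, hpa⟩
  rcases eq_or_ne p a with rfl | hpa'
  · exact isUpperHullVertex_of_wedge_neg (Or.inl ha) hab hAB
  refine ⟨Or.inl hp, fun hpAB => hpA ?_⟩
  obtain ⟨q, hq, hqp, hpq⟩ := mem_add_downCone_iff.1 hpAB
  obtain ⟨r, hr, hrq, hqr⟩ := mem_add_downCone_iff.1
    (mem_convexHull_add_downCone_of_fst_le (sub_pos.2 hab) (fun x hx => hbelow x hx.1) hq
      (hqp ▸ hpa))
  refine mem_add_downCone_iff.2 ⟨r, convexHull_mono ?_ hr, hrq.trans hqp, hpq.trans hqr⟩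
  rintro x (rfl | ⟨⟨hxA | hxB, hxp⟩, hxa⟩)
  · exact ⟨ha, hpa'.symm⟩
  · exact ⟨hxA, hxp⟩
  · exact absurd hxa (not_le.2 (hsep a ha x hxB))

lemma isUpperHullVertex_union_iff_of_mem_right (hsep : ∀ x ∈ A, ∀ y ∈ B, x.1 < y.1)
    (ha : a ∈ A) (hb : b ∈ B)
    (hAB : ∀ x ∈ A ∪ B, x ≠ a → x ≠ b → wedge (b - a) (x - a) < 0)
    (hp : p ∈ B) : IsUpperHullVertex (A ∪ B) p ↔ IsUpperHullVertex B p ∧ b.1 ≤ p.1 := by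
  have himage : negFst '' B ∪ negFst '' A = negFst '' (A ∪ B) := by
    rw [Set.union_comm, Set.image_union]
  have key := isUpperHullVertex_union_iff_of_mem_left (A := negFst '' B) (B := negFst '' A)
    (a := negFst b) (b := negFst a) (p := negFst p) ?_ (Set.mem_image_of_mem _ hb)
    (Set.mem_image_of_mem _ ha) ?_ (Set.mem_image_of_mem _ hp)
  · rwa [himage, isUpperHullVertex_image_iff _ image_negFst_downCone,
      isUpperHullVertex_image_iff _ image_negFst_downCone, negFst_apply, negFst_apply,
      neg_le_neg_iff] at key
  · rintro _ ⟨y, hy, rfl⟩ _ ⟨x, hx, rfl⟩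
    simpa using hsep x hx y hy
  · rw [himage]
    rintro _ ⟨x, hx, rfl⟩ hxb hxa
    rw [wedge_negFst]
    exact hAB x hx (ne_of_apply_ne _ hxa) (ne_of_apply_ne _ hxb)

end Bridge

theorem upperHullVertex_union_iff_general (A B : Set (ℝ × ℝ))
    (hsep : ∀ p ∈ A, ∀ q ∈ B, p.1 < q.1)
    (hcol : ∀ p ∈ A ∪ B, ∀ q ∈ A ∪ B, ∀ r ∈ A ∪ B,
      p ≠ q → q ≠ r → p ≠ r → ¬ Collinear ℝ ({p, q, r} : Set (ℝ × ℝ)))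
    {a b : ℝ × ℝ} (hab : IsBridge A B a b) :
    ∀ p : ℝ × ℝ, IsUpperHullVertex (A ∪ B) p ↔
      (IsUpperHullVertex A p ∧ p.1 ≤ a.1) ∨ (IsUpperHullVertex B p ∧ b.1 ≤ p.1) := by
  obtain ⟨ha, hb, hbelow⟩ := hab
  have hab : a.1 < b.1 := hsep a ha b hb
  have hAB : ∀ x ∈ A ∪ B, x ≠ a → x ≠ b → wedge (b - a) (x - a) < 0 := by
    intro x hx hxa hxb
    have hle : wedge (b - a) (x - a) ≤ 0 := by
      simp only [wedge_apply, Prod.fst_sub, Prod.snd_sub]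
      linarith [hbelow x hx]
    refine hle.lt_of_ne fun h => hcol x hx a (Or.inl ha) b (Or.inr hb) hxa ?_ hxb
      (collinear_of_wedge_eq_zero hab.ne h)
    exact fun h => hab.ne (congrArg Prod.fst h)
  intro p
  constructor
  · intro h
    rcases h.1 with hp | hp
    · exact Or.inl ((isUpperHullVertex_union_iff_of_mem_left hsep ha hb hAB hp).1 h)
    · exact Or.inr ((isUpperHullVertex_union_iff_of_mem_right hsep ha hb hAB hp).1 h)
  · rintro (h | h)
    · exact (isUpperHullVertex_union_iff_of_mem_left hsep ha hb hAB h.1.1).2 h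
    · exact (isUpperHullVertex_union_iff_of_mem_right hsep ha hb hAB h.1.1).2 h

/-- The upper-hull vertices of `A ∪ B` are exactly the upper-hull vertices of `A`
up to the bridge endpoint `a` together with the upper-hull vertices of `B` from the
bridge endpoint `b` on. -/
theorem upperHullVertex_union_iff (A B : Set (ℝ × ℝ))
    (hA : A.Finite) (hB : B.Finite) (hAne : A.Nonempty) (hBne : B.Nonempty)
    (hsep : ∀ p ∈ A, ∀ q ∈ B, p.1 < q.1)
    (hx : ∀ p ∈ A ∪ B, ∀ q ∈ A ∪ B, p.1 = q.1 → p = q)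
    (hcol : ∀ p ∈ A ∪ B, ∀ q ∈ A ∪ B, ∀ r ∈ A ∪ B,
      p ≠ q → q ≠ r → p ≠ r → ¬ Collinear ℝ ({p, q, r} : Set (ℝ × ℝ)))
    {a b : ℝ × ℝ} (hab : IsBridge A B a b) :
    ∀ p : ℝ × ℝ, IsUpperHullVertex (A ∪ B) p ↔
      (IsUpperHullVertex A p ∧ p.1 ≤ a.1) ∨ (IsUpperHullVertex B p ∧ b.1 ≤ p.1) :=
  upperHullVertex_union_iff_general A B hsep hcol hab
end
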